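/- arXiv:2605.09865 — 2 statements merged into one kernel-verified Lean document; each statement's English description precedes it below -/
import Mathlib

section
/- Let n be a prime, and let H = [CPM(β^{j·l_i})]_{0≤i<m, 0≤j<n} with l_0, ..., l_{m−1} distinct modulo n. Then H satisfies the row–column constraint: any two distinct rows of H have at most one position where both have entry 1. -/
/-!
Row `(i, a)` of `H` meets column `(j, b)` exactly when `b = a + j·lᵢ` in `ZMod n`, i.e. when the
point `(j, b)` of the affine plane over the field `ZMod n` lies on the line of slope `lᵢ` and
intercept `a`. Distinct rows give distinct lines, and two distinct lines meet in at most one point.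
-/

lemma Fin.natCast_zmod_injective (n : ℕ) :
    Function.Injective (fun x : Fin n => ((x : ℕ) : ZMod n)) :=
  fun x y h => Fin.ext <| by
    simpa [ZMod.natCast_eq_natCast_iff', Nat.mod_eq_of_lt x.isLt, Nat.mod_eq_of_lt y.isLt] using h

lemma eq_of_add_mul_eq_add_mul_of_ne {K : Type*} [Field K] {a a' c c' x y : K}
    (hne : (a, c) ≠ (a', c')) (hx : a + x * c = a' + x * c') (hy : a + y * c = a' + y * c') :
    x = y := by
  have hc : c - c' ≠ 0 := by
    intro hc
    obtain rfl : c = c' := sub_eq_zero.mp hc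
    exact hne (by rw [add_right_cancel hx])
  exact mul_right_cancel₀ hc (by linear_combination hx - hy)

theorem cpm_dispersion_rc_constraint_general
    (n m : ℕ)
    (hn : n.Prime)
    (l : Fin m → ℕ)
    (hldist : ∀ i i' : Fin m, l i % n = l i' % n → i = i')
    (H : Matrix (Fin m × Fin n) (Fin n × Fin n) (ZMod 2))
    (hH : ∀ (i : Fin m) (a : Fin n) (j : Fin n) (b : Fin n),
      H (i, a) (j, b) = if (b : ℕ) = ((a : ℕ) + (j : ℕ) * l i) % n then 1 else 0) :
    ∀ r r' : Fin m × Fin n, r ≠ r' →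
      (Finset.univ.filter
        (fun c : Fin n × Fin n => H r c = 1 ∧ H r' c = 1)).card ≤ 1 := by
  have : Fact n.Prime := ⟨hn⟩
  have incidence : ∀ i a j b, H (i, a) (j, b) = 1 →
      ((b : ℕ) : ZMod n) = (a : ℕ) + ((j : ℕ) : ZMod n) * l i := by
    intro i a j b h
    rw [hH] at h
    split_ifs at h with hb
    · rw [hb, ZMod.natCast_mod]
      push_cast
      rfl
    · exact absurd h zero_ne_one
  rintro ⟨i, a⟩ ⟨i', a'⟩ hne
  refine Finset.card_le_one.mpr ?_
  rintro ⟨j, b⟩ hc ⟨j₂, b₂⟩ hc₂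
  simp only [Finset.mem_filter, Finset.mem_univ, true_and] at hc hc₂
  have hlines :
      (((a : ℕ) : ZMod n), (l i : ZMod n)) ≠ (((a' : ℕ) : ZMod n), (l i' : ZMod n)) := by
    intro h
    obtain ⟨ha, hl⟩ := Prod.ext_iff.mp h
    obtain rfl := hldist i i' ((ZMod.natCast_eq_natCast_iff' _ _ _).mp hl)
    obtain rfl := Fin.natCast_zmod_injective n ha
    exact hne rfl
  obtain rfl : j = j₂ := Fin.natCast_zmod_injective n <| eq_of_add_mul_eq_add_mul_of_ne hlines
    ((incidence _ _ _ _ hc.1).symm.trans (incidence _ _ _ _ hc.2))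
    ((incidence _ _ _ _ hc₂.1).symm.trans (incidence _ _ _ _ hc₂.2))
  obtain rfl : b = b₂ := Fin.natCast_zmod_injective n <|
    (incidence _ _ _ _ hc.1).trans (incidence _ _ _ _ hc₂.1).symm
  rfl

/-- The CPM-dispersion `H = [CPM(β^{j·l_i})]` with `l_0,...,l_{m-1}`
distinct modulo the prime `n` satisfies the row–column constraint: any two distinct
rows of `H` have at most one position where both have entry `1`. -/
theorem cpm_dispersion_rc_constraint
    (F : Type*) [Field F] [Fintype F] (s n m : ℕ) (hs : Fintype.card F = 2 ^ s)
    (hn : n.Prime) (β : F) (hβ : orderOf β = n)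
    (l : Fin m → ℕ)
    (hldist : ∀ i i' : Fin m, l i % n = l i' % n → i = i')
    (H : Matrix (Fin m × Fin n) (Fin n × Fin n) (ZMod 2))
    (hH : ∀ (i : Fin m) (a : Fin n) (j : Fin n) (b : Fin n),
      H (i, a) (j, b) = if (b : ℕ) = ((a : ℕ) + (j : ℕ) * l i) % n then 1 else 0) :
    ∀ r r' : Fin m × Fin n, r ≠ r' →
      (Finset.univ.filter
        (fun c : Fin n × Fin n => H r c = 1 ∧ H r' c = 1)).card ≤ 1 :=
  cpm_dispersion_rc_constraint_general n m hn l hldist H hH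
end

section
/- Let n be prime, β of order n in a field F with n invertible in F, and for each 0 ≤ i < m and 0 ≤ j < n let D_{i,j} = diag(1, β^{j l_i}, β^{2 j l_i}, ..., β^{(n−1) j l_i}). Let V_blk = diag(V, ..., V) (n copies) where V = [β^{ab}]_{0≤a,b<n}. Then the block matrix equality holds: V_blk · [D_{i,j}]_{i,j} · V_blk^{-1} = [CPM(β^{j l_i})]_{i,j}, i.e., conjugating the interleaved block-diagonal parity-check structure by the blockwise Galois Fourier transform yields exactly the CPM-dispersion of B. -/
/-!
No inverse has to be computed: it suffices that `V_blk` is invertible and intertwines the two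
arrays, `V_blk · [D_{i,j}] = [CPM(β^{j l_i})] · V_blk`. The intertwining is blockwise
`V · diag(β^{b t})_b = P^t · V`: scaling column `b` of `V` by `β^{b t}` turns `β^{a b}` into
`β^{(a + t) b}`, which only depends on `a + t mod n` because `β^n = 1`. Invertibility holds because
`V_blk = I ⊗ V` and `V` is the Vandermonde matrix of the distinct powers `1, β, ..., β^{n-1}`.
-/

open Matrix
open scoped Kronecker

lemma pow_add_mod_orderOf_mul {M : Type*} [CommMonoid M] (β : M) (a t b : ℕ) :
    β ^ ((a + t) % orderOf β * b) = β ^ (a * b) * β ^ (b * t) := by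
  rw [pow_mul, pow_mod_orderOf, ← pow_mul, ← pow_add]
  ring_nf

lemma det_vandermonde_pow_ne_zero {R : Type*} [CommRing R] [IsDomain R] {n : ℕ} {β : R}
    (hβ : n ≤ orderOf β) :
    (vandermonde fun a : Fin n => β ^ (a : ℕ)).det ≠ 0 :=
  det_vandermonde_ne_zero_iff.mpr fun a a' h =>
    Fin.ext <| pow_injOn_Iio_orderOf (a.2.trans_le hβ) (a'.2.trans_le hβ) h

lemma eq_one_kronecker_of_apply_eq_ite {R ι κ : Type*} [MulZeroOneClass R] [DecidableEq ι]
    (A : Matrix κ κ R) (M : Matrix (ι × κ) (ι × κ) R)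
    (hM : ∀ j b j' b', M (j, b) (j', b') = if j = j' then A b b' else 0) :
    M = (1 : Matrix ι ι R) ⊗ₖ A := by
  ext ⟨j, b⟩ ⟨j', b'⟩
  simp [hM, one_apply, ite_mul]

theorem gft_conjugation_yields_cpm_dispersion_general
    (F : Type*) [Field F] (n m : ℕ)
    (β : F) (hβ : orderOf β = n)
    (l : Fin m → ℕ)
    (Dblk : Matrix (Fin m × Fin n) (Fin n × Fin n) F)
    (hD : ∀ (i : Fin m) (a : Fin n) (j : Fin n) (b : Fin n),
      Dblk (i, a) (j, b) = if a = b then β ^ ((a : ℕ) * ((j : ℕ) * l i)) else 0)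
    (Vm : Matrix (Fin m × Fin n) (Fin m × Fin n) F)
    (hVm : ∀ (i : Fin m) (a : Fin n) (i' : Fin m) (a' : Fin n),
      Vm (i, a) (i', a') = if i = i' then β ^ ((a : ℕ) * (a' : ℕ)) else 0)
    (Vn : Matrix (Fin n × Fin n) (Fin n × Fin n) F)
    (hVn : ∀ (j : Fin n) (b : Fin n) (j' : Fin n) (b' : Fin n),
      Vn (j, b) (j', b') = if j = j' then β ^ ((b : ℕ) * (b' : ℕ)) else 0)
    (Hcpm : Matrix (Fin m × Fin n) (Fin n × Fin n) F)
    (hHcpm : ∀ (i : Fin m) (a : Fin n) (j : Fin n) (b : Fin n),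
      Hcpm (i, a) (j, b) = if (b : ℕ) = ((a : ℕ) + (j : ℕ) * l i) % n then 1 else 0) :
    Vm * Dblk * Vn⁻¹ = Hcpm := by
  set V := vandermonde fun a : Fin n => β ^ (a : ℕ)
  have hVn_kron : Vn = (1 : Matrix (Fin n) (Fin n) F) ⊗ₖ V :=
    eq_one_kronecker_of_apply_eq_ite V Vn fun j b j' b' => by
      simp only [hVn, V, vandermonde_apply, ← pow_mul]
  have hVn_unit : IsUnit Vn.det := by
    rw [hVn_kron, det_kronecker, det_one, one_pow, one_mul, isUnit_iff_ne_zero]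
    exact pow_ne_zero _ (det_vandermonde_pow_ne_zero hβ.ge)
  have intertwine : Vm * Dblk = Hcpm * Vn := by
    ext ⟨i, a⟩ ⟨j, b⟩
    have shift : ∀ c : Fin n,
        (c : ℕ) = (a + j * l i) % n ↔ c = ⟨(a + j * l i) % n, Nat.mod_lt _ a.pos⟩ :=
      fun c => by rw [Fin.ext_iff]
    have lhs : (Vm * Dblk) (i, a) (j, b) = β ^ ((a : ℕ) * b) * β ^ ((b : ℕ) * (j * l i)) := by
      simp [mul_apply, Fintype.sum_prod_type, hVm, hD]
    have rhs : (Hcpm * Vn) (i, a) (j, b) = β ^ ((a + j * l i) % n * b) := by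
      simp [mul_apply, Fintype.sum_prod_type_right, hHcpm, hVn, shift]
    rw [lhs, rhs, ← pow_add_mod_orderOf_mul, hβ]
  rw [intertwine, mul_nonsing_inv_cancel_right _ _ hVn_unit]

/-- Conjugating the interleaved block-diagonal array `[D_{i,j}]` of diagonal
matrices `D_{i,j} = diag(β^{t·j·l_i})_{0≤t<n}` by the block-diagonal Galois Fourier
transform `V_blk = diag(V, ..., V)` (with `V = [β^{ab}]`) yields exactly the
CPM-dispersion of `B`:  `V_blk · [D_{i,j}] · V_blk⁻¹ = [CPM(β^{j l_i})]`. -/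
theorem gft_conjugation_yields_cpm_dispersion
    (F : Type*) [Field F] (n m : ℕ) (hn : n.Prime)
    (β : F) (hβ : orderOf β = n) (hninv : (n : F) ≠ 0)
    (l : Fin m → ℕ)
    (Dblk : Matrix (Fin m × Fin n) (Fin n × Fin n) F)
    (hD : ∀ (i : Fin m) (a : Fin n) (j : Fin n) (b : Fin n),
      Dblk (i, a) (j, b) = if a = b then β ^ ((a : ℕ) * ((j : ℕ) * l i)) else 0)
    (Vm : Matrix (Fin m × Fin n) (Fin m × Fin n) F)
    (hVm : ∀ (i : Fin m) (a : Fin n) (i' : Fin m) (a' : Fin n),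
      Vm (i, a) (i', a') = if i = i' then β ^ ((a : ℕ) * (a' : ℕ)) else 0)
    (Vn : Matrix (Fin n × Fin n) (Fin n × Fin n) F)
    (hVn : ∀ (j : Fin n) (b : Fin n) (j' : Fin n) (b' : Fin n),
      Vn (j, b) (j', b') = if j = j' then β ^ ((b : ℕ) * (b' : ℕ)) else 0)
    (Hcpm : Matrix (Fin m × Fin n) (Fin n × Fin n) F)
    (hHcpm : ∀ (i : Fin m) (a : Fin n) (j : Fin n) (b : Fin n),
      Hcpm (i, a) (j, b) = if (b : ℕ) = ((a : ℕ) + (j : ℕ) * l i) % n then 1 else 0) :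
    Vm * Dblk * Vn⁻¹ = Hcpm :=
  gft_conjugation_yields_cpm_dispersion_general F n m β hβ l Dblk hD Vm hVm Vn hVn Hcpm hHcpm
end
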